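/- arXiv:2501.12474 — 2 statements merged into one kernel-verified Lean document; each statement's English description precedes it below -/
import Mathlib

section
/- Let v ∈ C²(ℝ², ℝ^k), w ∈ C¹(ℝ², ℝ²), a ∈ C²(ℝ²,ℝ), λ > 0, and fix i ∈ {1,2}, j ∈ {1,…,k}. Define Γ(t) = 2 sin t, Γ̄(t) = (1/2)cos(2t), Γ̈(t) = -(1/2)sin(2t), Γ̃(t) = 1 - (1/2)cos(2t), and set ṽ = v + (a(x)/λ)·Γ(λx_i)·e_j, w̃ = w - (a(x)/λ)·Γ(λx_i)·∇v^j + (a(x)/λ²)·Γ̄(λx_i)·∇a(x) + (a(x)²/λ)·Γ̈(λx_i)·e_i. Then on all of ℝ²: ((1/2)(∇ṽ)ᵀ∇ṽ + sym∇w̃) - ((1/2)(∇v)ᵀ∇v + sym∇w) - a(x)²·e_i⊗e_i = -(a/λ)·Γ(λx_i)·∇²v^j + (a/λ²)·Γ̄(λx_i)·∇²a + (1/λ²)·Γ̃(λx_i)·∇a⊗∇a. -/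
/-- The partial derivative `∂_i f` on `ℝ²`. -/
noncomputable def pd (f : (Fin 2 → ℝ) → ℝ) (i : Fin 2) (p : Fin 2 → ℝ) : ℝ :=
  fderiv ℝ f p (Pi.single i 1)

/-- The second partial derivative `∂_{i₁}∂_{i₂} f` on `ℝ²`. -/
noncomputable def pd2 (f : (Fin 2 → ℝ) → ℝ) (i₁ i₂ : Fin 2) (p : Fin 2 → ℝ) : ℝ :=
  pd (fun q => pd f i₁ q) i₂ p

lemma hasFDerivAt_coord (i : Fin 2) (p : Fin 2 → ℝ) :
    HasFDerivAt (fun q : Fin 2 → ℝ => q i)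
      (ContinuousLinearMap.proj (R := ℝ) (φ := fun _ : Fin 2 => ℝ) i) p := by
  exact (ContinuousLinearMap.proj (R := ℝ) (φ := fun _ : Fin 2 => ℝ) i).hasFDerivAt

lemma fderiv_apply_single (f : (Fin 2 → ℝ) → ℝ) (m : Fin 2) (p : Fin 2 → ℝ) :
    fderiv ℝ f p (Pi.single m 1) = pd f m p := rfl

lemma pd_pd (f : (Fin 2 → ℝ) → ℝ) (i' m : Fin 2) (p : Fin 2 → ℝ) :
    pd (fun q => pd f i' q) m p = pd2 f i' m p := rfl

lemma contDiff_pd {f : (Fin 2 → ℝ) → ℝ} (hf : ContDiff ℝ 2 f) (i' : Fin 2) :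
    ContDiff ℝ 1 fun q => pd f i' q := by
  exact (hf.fderiv_right (m := 1) (by norm_num)).clm_apply
    (contDiff_const (c := (Pi.single i' 1 : Fin 2 → ℝ)))

lemma diffAt_pd {f : (Fin 2 → ℝ) → ℝ} (hf : ContDiff ℝ 2 f) (i' : Fin 2) (p : Fin 2 → ℝ) :
    DifferentiableAt ℝ (fun q => pd f i' q) p :=
  ((contDiff_pd hf i').differentiable one_ne_zero).differentiableAt

lemma pd2_comm {f : (Fin 2 → ℝ) → ℝ} (hf : ContDiff ℝ 2 f) (i₁ i₂ : Fin 2) (p : Fin 2 → ℝ) :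
    pd2 f i₁ i₂ p = pd2 f i₂ i₁ p := by
  have hsym : IsSymmSndFDerivAt ℝ f p := (hf.contDiffAt).isSymmSndFDerivAt (by norm_num)
  have key : ∀ m₁ m₂ : Fin 2, pd2 f m₁ m₂ p
      = fderiv ℝ (fderiv ℝ f) p (Pi.single m₂ 1) (Pi.single m₁ 1) := by
    intro m₁ m₂
    have hdf : DifferentiableAt ℝ (fderiv ℝ f) p :=
      ((hf.fderiv_right (m := 1) (by norm_num)).differentiable one_ne_zero).differentiableAt
    have := fderiv_clm_apply (𝕜 := ℝ) (c := fderiv ℝ f)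
      (u := fun _ => (Pi.single m₁ 1 : Fin 2 → ℝ)) hdf (differentiableAt_const _)
    have h2 : pd2 f m₁ m₂ p
        = fderiv ℝ (fun q => fderiv ℝ f q (Pi.single m₁ 1)) p (Pi.single m₂ 1) := rfl
    rw [h2, this]
    simp
  rw [key i₁ i₂, key i₂ i₁, hsym]

lemma pd_pertV {a f : (Fin 2 → ℝ) → ℝ} (ha : ContDiff ℝ 2 a) (hf : ContDiff ℝ 2 f)
    (lam t : ℝ) (hlam : lam ≠ 0) (i m : Fin 2) (p : Fin 2 → ℝ) :
    pd (fun q => f q + a q / lam * (2 * Real.sin (lam * q i)) * t) m p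
      = pd f m p + t * (2 * Real.sin (lam * p i) / lam * pd a m p
          + 2 * a p * Real.cos (lam * p i) * (if i = m then 1 else 0)) := by
  have hA : HasFDerivAt a (fderiv ℝ a p) p :=
    ((ha.differentiable (by norm_num)).differentiableAt).hasFDerivAt
  have hF : HasFDerivAt f (fderiv ℝ f p) p :=
    ((hf.differentiable (by norm_num)).differentiableAt).hasFDerivAt
  have hsin := ((hasFDerivAt_coord i p).const_mul lam).sin
  have total := hF.add (((hA.mul_const lam⁻¹).mul (hsin.const_mul 2)).mul_const t)
  have goal1 : pd (fun q => f q + a q / lam * (2 * Real.sin (lam * q i)) * t) m p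
      = (fderiv ℝ (fun q => f q + a q * lam⁻¹ * (2 * Real.sin (lam * q i)) * t) p)
        (Pi.single m 1) := by
    simp only [pd, div_eq_mul_inv]
  rw [goal1, (show HasFDerivAt (fun q => f q + a q * lam⁻¹ * (2 * Real.sin (lam * q i)) * t) _ p
    from total).fderiv]
  simp only [ContinuousLinearMap.add_apply, ContinuousLinearMap.smul_apply,
    ContinuousLinearMap.coe_smul', Pi.smul_apply, ContinuousLinearMap.proj_apply,
    smul_eq_mul, Pi.single_apply, fderiv_apply_single]
  field_simp
  split_ifs <;> ring

lemma pd_pertW {a b g : (Fin 2 → ℝ) → ℝ}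
    (ha : ContDiff ℝ 2 a) (hb : ContDiff ℝ 2 b) (hg : ContDiff ℝ 1 g)
    (lam t : ℝ) (hlam : lam ≠ 0) (i i' m : Fin 2) (p : Fin 2 → ℝ) :
    pd (fun q => g q - a q / lam * (2 * Real.sin (lam * q i)) * pd b i' q
        + a q / lam ^ 2 * (1 / 2 * Real.cos (2 * (lam * q i))) * pd a i' q
        + a q ^ 2 / lam * (-(1 / 2) * Real.sin (2 * (lam * q i))) * t) m p
    = pd g m p
      - ((pd a m p / lam) * (2 * Real.sin (lam * p i))
          + a p * (2 * Real.cos (lam * p i)) * (if i = m then 1 else 0)) * pd b i' p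
      - a p / lam * (2 * Real.sin (lam * p i)) * pd2 b i' m p
      + ((pd a m p / lam ^ 2) * (1 / 2 * Real.cos (2 * (lam * p i)))
          - a p / lam * Real.sin (2 * (lam * p i)) * (if i = m then 1 else 0)) * pd a i' p
      + a p / lam ^ 2 * (1 / 2 * Real.cos (2 * (lam * p i))) * pd2 a i' m p
      + (2 * a p * pd a m p / lam * (-(1 / 2) * Real.sin (2 * (lam * p i)))
          - a p ^ 2 * Real.cos (2 * (lam * p i)) * (if i = m then 1 else 0)) * t := by
  have hA : HasFDerivAt a (fderiv ℝ a p) p :=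
    ((ha.differentiable (by norm_num)).differentiableAt).hasFDerivAt
  have hG : HasFDerivAt g (fderiv ℝ g p) p :=
    ((hg.differentiable one_ne_zero).differentiableAt).hasFDerivAt
  have hpb : HasFDerivAt (fun q => pd b i' q) (fderiv ℝ (fun q => pd b i' q) p) p :=
    (diffAt_pd hb i' p).hasFDerivAt
  have hpa : HasFDerivAt (fun q => pd a i' q) (fderiv ℝ (fun q => pd a i' q) p) p :=
    (diffAt_pd ha i' p).hasFDerivAt
  have hsin := ((hasFDerivAt_coord i p).const_mul lam).sin
  have hcos2 := (((hasFDerivAt_coord i p).const_mul lam).const_mul 2).cos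
  have hsin2 := (((hasFDerivAt_coord i p).const_mul lam).const_mul 2).sin
  have total := ((hG.sub (((hA.mul_const lam⁻¹).mul (hsin.const_mul 2)).mul hpb)).add
      (((hA.mul_const ((lam ^ 2)⁻¹)).mul (hcos2.const_mul (1 / 2))).mul hpa)).add
    ((((hA.mul hA).mul_const lam⁻¹).mul (hsin2.const_mul (-(1 / 2)))).mul_const t)
  have goal1 : pd (fun q => g q - a q / lam * (2 * Real.sin (lam * q i)) * pd b i' q
        + a q / lam ^ 2 * (1 / 2 * Real.cos (2 * (lam * q i))) * pd a i' q
        + a q ^ 2 / lam * (-(1 / 2) * Real.sin (2 * (lam * q i))) * t) m p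
      = fderiv ℝ (fun q => g q - a q * lam⁻¹ * (2 * Real.sin (lam * q i)) * pd b i' q
        + a q * (lam ^ 2)⁻¹ * (1 / 2 * Real.cos (2 * (lam * q i))) * pd a i' q
        + a q * a q * lam⁻¹ * (-(1 / 2) * Real.sin (2 * (lam * q i))) * t) p
        (Pi.single m 1) := by
    simp only [div_eq_mul_inv, pow_two]
    rfl
  rw [goal1, (show HasFDerivAt (fun q => g q - a q * lam⁻¹ * (2 * Real.sin (lam * q i)) * pd b i' q
        + a q * (lam ^ 2)⁻¹ * (1 / 2 * Real.cos (2 * (lam * q i))) * pd a i' q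
        + a q * a q * lam⁻¹ * (-(1 / 2) * Real.sin (2 * (lam * q i))) * t) _ p
      from total).fderiv]
  simp only [ContinuousLinearMap.add_apply, ContinuousLinearMap.coe_sub', Pi.sub_apply,
    ContinuousLinearMap.smul_apply, ContinuousLinearMap.coe_smul', Pi.smul_apply,
    ContinuousLinearMap.proj_apply, smul_eq_mul, Pi.single_apply, fderiv_apply_single, pd_pd, Pi.mul_apply]
  field_simp
  split_ifs <;> ring

lemma ite_one_comm (x y : Fin 2) : (if x = y then (1 : ℝ) else 0) = if y = x then 1 else 0 := by
  simp [eq_comm]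

/-- The single-step perturbation identity of the convex integration scheme:
adding the one-dimensional oscillation in codimension direction `e_j` and
oscillation direction `e_i` cancels the rank-one defect `a² e_i ⊗ e_i` up to
explicit errors of order `1/λ` and `1/λ²`. -/
theorem step_identity {k : ℕ}
    (v : (Fin 2 → ℝ) → Fin k → ℝ) (w : (Fin 2 → ℝ) → Fin 2 → ℝ)
    (a : (Fin 2 → ℝ) → ℝ) (lam : ℝ) (hlam : 0 < lam)
    (i : Fin 2) (j : Fin k)
    (hv : ContDiff ℝ 2 v) (hw : ContDiff ℝ 1 w) (ha : ContDiff ℝ 2 a)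
    (Γ Γbar Γddot Γtil : ℝ → ℝ)
    (hΓ : Γ = fun t => 2 * Real.sin t)
    (hΓbar : Γbar = fun t => (1 / 2) * Real.cos (2 * t))
    (hΓddot : Γddot = fun t => -(1 / 2) * Real.sin (2 * t))
    (hΓtil : Γtil = fun t => 1 - (1 / 2) * Real.cos (2 * t))
    (vt : (Fin 2 → ℝ) → Fin k → ℝ) (wt : (Fin 2 → ℝ) → Fin 2 → ℝ)
    (hvt : ∀ q j', vt q j' = v q j' + (a q / lam) * Γ (lam * q i) * (if j' = j then 1 else 0))
    (hwt : ∀ q i', wt q i' = w q i' - (a q / lam) * Γ (lam * q i) * pd (fun r => v r j) i' q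
        + (a q / lam ^ 2) * Γbar (lam * q i) * pd a i' q
        + (a q ^ 2 / lam) * Γddot (lam * q i) * (if i' = i then 1 else 0)) :
    ∀ (p : Fin 2 → ℝ) (i₁ i₂ : Fin 2),
      ((1 / 2) * ∑ j', pd (fun q => vt q j') i₁ p * pd (fun q => vt q j') i₂ p
          + (1 / 2) * (pd (fun q => wt q i₂) i₁ p + pd (fun q => wt q i₁) i₂ p))
      - ((1 / 2) * ∑ j', pd (fun q => v q j') i₁ p * pd (fun q => v q j') i₂ p
          + (1 / 2) * (pd (fun q => w q i₂) i₁ p + pd (fun q => w q i₁) i₂ p))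
      - a p ^ 2 * ((if i₁ = i then 1 else 0) * (if i₂ = i then 1 else 0))
      = -(a p / lam) * Γ (lam * p i) * pd2 (fun q => v q j) i₁ i₂ p
        + (a p / lam ^ 2) * Γbar (lam * p i) * pd2 a i₁ i₂ p
        + (1 / lam ^ 2) * Γtil (lam * p i) * (pd a i₁ p * pd a i₂ p) := by
  intro p i₁ i₂
  have hlam' : lam ≠ 0 := ne_of_gt hlam
  have hvj : ∀ j', ContDiff ℝ 2 (fun q => v q j') := fun j' => contDiff_pi.1 hv j'
  have hwi : ∀ i', ContDiff ℝ 1 (fun q => w q i') := fun i' => contDiff_pi.1 hw i'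
  have evt : ∀ j', (fun q => vt q j')
      = fun q => v q j' + a q / lam * (2 * Real.sin (lam * q i))
          * (if j' = j then 1 else 0) := by
    intro j'; funext q; simp only [hvt, hΓ]
  have ewt : ∀ i', (fun q => wt q i')
      = fun q => w q i' - a q / lam * (2 * Real.sin (lam * q i)) * pd (fun r => v r j) i' q
          + a q / lam ^ 2 * (1 / 2 * Real.cos (2 * (lam * q i))) * pd a i' q
          + a q ^ 2 / lam * (-(1 / 2) * Real.sin (2 * (lam * q i)))
            * (if i' = i then 1 else 0) := by
    intro i'; funext q; simp only [hwt, hΓ, hΓbar, hΓddot]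
  have hVT : ∀ (j' : Fin k) (m : Fin 2), pd (fun q => vt q j') m p
      = pd (fun q => v q j') m p + (if j' = j then 1 else 0)
          * (2 * Real.sin (lam * p i) / lam * pd a m p
             + 2 * a p * Real.cos (lam * p i) * (if i = m then 1 else 0)) := by
    intro j' m
    rw [evt j']
    exact pd_pertV ha (hvj j') lam _ hlam' i m p
  have hWT : ∀ (i' m : Fin 2), pd (fun q => wt q i') m p
      = pd (fun q => w q i') m p
        - ((pd a m p / lam) * (2 * Real.sin (lam * p i))
            + a p * (2 * Real.cos (lam * p i)) * (if i = m then 1 else 0))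
          * pd (fun r => v r j) i' p
        - a p / lam * (2 * Real.sin (lam * p i)) * pd2 (fun r => v r j) i' m p
        + ((pd a m p / lam ^ 2) * (1 / 2 * Real.cos (2 * (lam * p i)))
            - a p / lam * Real.sin (2 * (lam * p i)) * (if i = m then 1 else 0)) * pd a i' p
        + a p / lam ^ 2 * (1 / 2 * Real.cos (2 * (lam * p i))) * pd2 a i' m p
        + (2 * a p * pd a m p / lam * (-(1 / 2) * Real.sin (2 * (lam * p i)))
            - a p ^ 2 * Real.cos (2 * (lam * p i)) * (if i = m then 1 else 0))
          * (if i' = i then 1 else 0) := by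
    intro i' m
    rw [ewt i']
    exact pd_pertW ha (hvj j) (hwi i') lam _ hlam' i i' m p
  obtain ⟨P, hP⟩ : ∃ P : Fin 2 → ℝ, P = fun m => 2 * Real.sin (lam * p i) / lam * pd a m p
      + 2 * a p * Real.cos (lam * p i) * (if i = m then 1 else 0) := ⟨_, rfl⟩
  have hsum : ∑ j', pd (fun q => vt q j') i₁ p * pd (fun q => vt q j') i₂ p
      = (∑ j', pd (fun q => v q j') i₁ p * pd (fun q => v q j') i₂ p)
        + (pd (fun q => v q j) i₁ p * P i₂ + P i₁ * pd (fun q => v q j) i₂ p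
            + P i₁ * P i₂) := by
    have step : ∀ j' : Fin k, pd (fun q => vt q j') i₁ p * pd (fun q => vt q j') i₂ p
        = pd (fun q => v q j') i₁ p * pd (fun q => v q j') i₂ p
          + (if j' = j then (pd (fun q => v q j) i₁ p * P i₂
              + P i₁ * pd (fun q => v q j) i₂ p + P i₁ * P i₂) else 0) := by
      intro j'
      rw [hVT j' i₁, hVT j' i₂]
      simp only [hP]
      by_cases h : j' = j
      · subst h; split_ifs <;> first | ring | simp_all
      · simp only [if_neg h]; ring
    rw [Finset.sum_congr rfl (fun j' _ => step j'), Finset.sum_add_distrib,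
      Finset.sum_ite_eq' Finset.univ j, if_pos (Finset.mem_univ j)]
  rw [hsum, hWT i₂ i₁, hWT i₁ i₂,
    pd2_comm (hvj j) i₂ i₁ p, pd2_comm ha i₂ i₁ p, hP,
    hΓ, hΓbar, hΓtil, ite_one_comm i₁ i, ite_one_comm i₂ i]
  simp only [Real.sin_two_mul, Real.cos_two_mul]
  linear_combination (2 * pd a i₁ p * pd a i₂ p / lam ^ 2)
    * Real.sin_sq_add_cos_sq (lam * p i)
end

section
/- Let N ≥ 1, K ≥ 4 be integers, γ ∈ (0,1) with γ ≤ 1/((F_{K+2}-3)(1+N/2)), and let μ₀, σ₀, σ ≥ 1 satisfy σ/(μ₀·σ)^γ ≥ σ₀. Define the Fibonacci frequencies λ_k = μ₀·σ^{(F_{k+2}-2)+(F_{k+2}-3)N/2}, μ_k = μ₀·σ^{(F_{k+2}-2)+(F_{k+3}-3)N/2} for 1 ≤ k ≤ K-1, and λ_K = μ₀·σ^{(2F_K-2)+(F_{K+2}-3)N/2}, with μ_{0} also serving as λ_0. Then λ_k^{1-γ} ≥ μ_{k-1}·σ₀ for all 1 ≤ k ≤ K. -/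
/-- The Fibonacci sequence with `F 0 = F 1 = 1`. -/
def F : ℕ → ℕ
  | 0 => 1
  | 1 => 1
  | n + 2 => F n + F (n + 1)

lemma F_fib : ∀ n, F n = Nat.fib (n + 1)
  | 0 => rfl
  | 1 => rfl
  | n + 2 => by
    rw [show F (n + 2) = F n + F (n + 1) from rfl, F_fib n, F_fib (n + 1)]
    conv_rhs => rw [show n + 2 + 1 = n + 1 + 2 from rfl, Nat.fib_add_two]

lemma F_mono {m n : ℕ} (h : m ≤ n) : F m ≤ F n := by
  rw [F_fib, F_fib]; exact Nat.fib_mono (by omega)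

lemma F_two_le {n : ℕ} (h : 2 ≤ n) : 2 ≤ F n :=
  le_trans (by norm_num [F]) (F_mono h)

lemma key_ineq (γ σ μ₀ σ₀ : ℝ) (hσ : 1 ≤ σ) (hμ₀ : 1 ≤ μ₀)
    (hcond : σ / (μ₀ * σ) ^ γ ≥ σ₀) (a b : ℝ)
    (hab : b + 1 - γ ≤ a * (1 - γ)) :
    (μ₀ * σ ^ a) ^ ((1 : ℝ) - γ) ≥ μ₀ * σ ^ b * σ₀ := by
  have hμp : (0 : ℝ) < μ₀ := lt_of_lt_of_le one_pos hμ₀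
  have hσp : (0 : ℝ) < σ := lt_of_lt_of_le one_pos hσ
  have hσb : (0 : ℝ) < σ ^ b := Real.rpow_pos_of_pos hσp b
  have hσa : (0 : ℝ) < σ ^ a := Real.rpow_pos_of_pos hσp a
  have h1 : μ₀ * σ ^ b * σ₀ ≤ μ₀ * σ ^ b * (σ / (μ₀ * σ) ^ γ) :=
    mul_le_mul_of_nonneg_left hcond (by positivity)
  have h2 : μ₀ * σ ^ b * (σ / (μ₀ * σ) ^ γ) = μ₀ ^ ((1 : ℝ) - γ) * σ ^ (b + 1 - γ) := by
    rw [Real.mul_rpow hμp.le hσp.le, Real.rpow_sub hμp, Real.rpow_one,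
      show b + 1 - γ = b + (1 - γ) by ring, Real.rpow_add hσp, Real.rpow_sub hσp,
      Real.rpow_one]
    have h3 : μ₀ ^ γ ≠ 0 := (Real.rpow_pos_of_pos hμp γ).ne'
    have h4 : σ ^ γ ≠ 0 := (Real.rpow_pos_of_pos hσp γ).ne'
    field_simp
  have h4 : (μ₀ * σ ^ a) ^ ((1 : ℝ) - γ) = μ₀ ^ ((1 : ℝ) - γ) * σ ^ (a * (1 - γ)) := by
    rw [Real.mul_rpow hμp.le hσa.le, ← Real.rpow_mul hσp.le]
  have h5 : σ ^ (b + 1 - γ) ≤ σ ^ (a * (1 - γ)) :=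
    Real.rpow_le_rpow_of_exponent_le hσ hab
  calc μ₀ * σ ^ b * σ₀ ≤ μ₀ ^ ((1 : ℝ) - γ) * σ ^ (b + 1 - γ) := by rw [← h2]; exact h1
    _ ≤ μ₀ ^ ((1 : ℝ) - γ) * σ ^ (a * (1 - γ)) :=
        mul_le_mul_of_nonneg_left h5 (Real.rpow_pos_of_pos hμp _).le
    _ = (μ₀ * σ ^ a) ^ ((1 : ℝ) - γ) := h4.symm

/-- The mollification–frequency compatibility condition `λ_k^{1-γ} ≥ μ_{k-1}·σ₀`
holds for the Fibonacci frequencies. -/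
theorem mollification_frequency_compat (N K : ℕ) (hN : 1 ≤ N) (hK : 4 ≤ K)
    (γ : ℝ) (hγ0 : 0 < γ) (hγ1 : γ < 1)
    (hγ : γ ≤ 1 / (((F (K + 2) : ℝ) - 3) * (1 + (N : ℝ) / 2)))
    (σ μ₀ σ₀ : ℝ) (hσ : 1 ≤ σ) (hμ₀ : 1 ≤ μ₀) (hσ₀ : 1 ≤ σ₀)
    (hcond : σ / (μ₀ * σ) ^ γ ≥ σ₀)
    (lam mu : ℕ → ℝ)
    (hmu0 : mu 0 = μ₀) (hlam0 : lam 0 = μ₀)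
    (hlam : ∀ k, 1 ≤ k → k ≤ K - 1 →
      lam k = μ₀ * σ ^ (((F (k + 2) : ℝ) - 2) + ((F (k + 2) : ℝ) - 3) * (N : ℝ) / 2))
    (hmu : ∀ k, 1 ≤ k → k ≤ K - 1 →
      mu k = μ₀ * σ ^ (((F (k + 2) : ℝ) - 2) + ((F (k + 3) : ℝ) - 3) * (N : ℝ) / 2))
    (hlamK : lam K = μ₀ * σ ^ ((2 * (F K : ℝ) - 2) + ((F (K + 2) : ℝ) - 3) * (N : ℝ) / 2)) :
    ∀ k, 1 ≤ k → k ≤ K → lam k ^ ((1 : ℝ) - γ) ≥ mu (k - 1) * σ₀ := by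
  -- basic positivity of the denominator in hγ
  have hFK2 : (13 : ℕ) ≤ F (K + 2) := by
    calc (13 : ℕ) = F 6 := by norm_num [F]
    _ ≤ F (K + 2) := F_mono (by omega)
  have hFK2R : (13 : ℝ) ≤ (F (K + 2) : ℝ) := by exact_mod_cast hFK2
  have hNR : (1 : ℝ) ≤ (N : ℝ) := by exact_mod_cast hN
  have hDpos : (0 : ℝ) < ((F (K + 2) : ℝ) - 3) * (1 + (N : ℝ) / 2) := by nlinarith
  have hγD : γ * (((F (K + 2) : ℝ) - 3) * (1 + (N : ℝ) / 2)) ≤ 1 := by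
    rw [le_div_iff₀ hDpos] at hγ
    linarith
  -- formula for mu (k - 1)
  intro k hk1 hkK
  have hmu' : mu (k - 1) =
      μ₀ * σ ^ (((F (k + 1) : ℝ) - 2) + ((F (k + 2) : ℝ) - 3) * (N : ℝ) / 2) := by
    rcases eq_or_lt_of_le hk1 with h | h
    · rw [← h]
      norm_num [hmu0, F, show F 3 = 3 by norm_num [F]]
    · have h2 : 2 ≤ k := h
      have := hmu (k - 1) (by omega) (by omega)
      rw [show k - 1 + 2 = k + 1 by omega, show k - 1 + 3 = k + 2 by omega] at this
      exact this
  rw [hmu']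
  rcases eq_or_lt_of_le hkK with hkeq | hklt
  · -- case k = K
    subst hkeq
    rw [hlamK]
    apply key_ineq γ σ μ₀ σ₀ hσ hμ₀ hcond
    have hrec1 : F (k + 2) = F k + F (k + 1) := rfl
    obtain ⟨j, hj⟩ : ∃ j, k = j + 2 := ⟨k - 2, by omega⟩
    have hrec2 : F (k + 1) = F (k - 1) + F k := by
      subst hj
      rw [show j + 2 - 1 = j + 1 by omega]; rfl
    have hrec3 : F k = F (k - 2) + F (k - 1) := by
      subst hj
      rw [show j + 2 - 2 = j by omega, show j + 2 - 1 = j + 1 by omega]; rfl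
    have hc1 : (F (k + 2) : ℝ) = F k + F (k + 1) := by exact_mod_cast congrArg Nat.cast hrec1
    have hc2 : (F (k + 1) : ℝ) = F (k - 1) + F k := by exact_mod_cast congrArg Nat.cast hrec2
    have hc3 : (F k : ℝ) = F (k - 2) + F (k - 1) := by exact_mod_cast congrArg Nat.cast hrec3
    have hk2 : (2 : ℝ) ≤ (F (k - 2) : ℝ) := by exact_mod_cast F_two_le (by omega)
    have hF1 : (1 : ℝ) ≤ (F (k - 1) : ℝ) := by
      exact_mod_cast le_trans (by norm_num [F]) (F_mono (Nat.zero_le _))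
    -- a - 1 = (2 F k - 3) + (F (k+2) - 3) N/2 ≤ D since 2 F k - 3 ≤ F (k+2) - 3
    have hD' : (2 * (F k : ℝ) - 2) + ((F (k + 2) : ℝ) - 3) * (N : ℝ) / 2 - 1 ≤
        ((F (k + 2) : ℝ) - 3) * (1 + (N : ℝ) / 2) := by linarith [hc1, hc2, hF1]
    have h6 : γ * ((2 * (F k : ℝ) - 2) + ((F (k + 2) : ℝ) - 3) * (N : ℝ) / 2 - 1) ≤ 1 :=
      le_trans (mul_le_mul_of_nonneg_left hD' hγ0.le) hγD
    linarith [h6, hc1, hc2, hc3, hk2]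
  · -- case k ≤ K - 1
    rw [hlam k hk1 (by omega)]
    apply key_ineq γ σ μ₀ σ₀ hσ hμ₀ hcond
    rcases eq_or_lt_of_le hk1 with h1 | h1
    · rw [← h1]
      norm_num [show F 2 = 2 by norm_num [F], show F 3 = 3 by norm_num [F]]
    · have hk2 : (2 : ℝ) ≤ (F k : ℝ) := by exact_mod_cast F_two_le h1
      have hrec1 : (F (k + 2) : ℝ) = F k + F (k + 1) := by
        exact_mod_cast congrArg Nat.cast (show F (k + 2) = F k + F (k + 1) from rfl)
      have hmono : (F (k + 2) : ℝ) ≤ (F (K + 2) : ℝ) := by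
        exact_mod_cast F_mono (by omega)
      have hD' : ((F (k + 2) : ℝ) - 2) + ((F (k + 2) : ℝ) - 3) * (N : ℝ) / 2 - 1 ≤
          ((F (K + 2) : ℝ) - 3) * (1 + (N : ℝ) / 2) := by
        nlinarith [mul_nonneg (sub_nonneg.2 hmono) (by positivity : (0 : ℝ) ≤ (N : ℝ) / 2)]
      have h6 : γ * (((F (k + 2) : ℝ) - 2) + ((F (k + 2) : ℝ) - 3) * (N : ℝ) / 2 - 1) ≤ 1 :=
        le_trans (mul_le_mul_of_nonneg_left hD' hγ0.le) hγD
      linarith [h6, hrec1, hk2]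
end
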